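/- Let d ≥ 1, 0 < γ < d+1, 0 < s ≤ 1, ν > 0, let W^t ∈ ℝ, and let φ ≥ 0 satisfy φ − νW^t ≥ 0. Then for all Schwartz functions f, h on ℝ^d and every ξ ∈ ℝ^d, |e^{φ(1+|ξ|^s)} F(B^t(f,h))(ξ)| ≤ (2π)^{−d} C_𝗀 |𝓜| ∫_{ℝ^d} |ξ| |η|^{1−γ} |e^{φ(1+|ξ−η|^s)} f̂(ξ−η)| · |e^{φ(1+|η|^s)} ĥ(η)| dη. -/

import Mathlib

open MeasureTheory Real Set Filter
open scoped ENNReal RealInnerProductSpace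

noncomputable section

/-- Euclidean space ℝ^d. -/
abbrev Ed (d : ℕ) := EuclideanSpace ℝ (Fin d)

/-- Japanese bracket ⟨ξ⟩ = (1+|ξ|²)^{1/2}. -/
def jap {d : ℕ} (ξ : Ed d) : ℝ := (1 + ‖ξ‖ ^ 2) ^ ((1 : ℝ) / 2)

/-- Fourier–Lebesgue norm ‖⟨·⟩^κ F‖_{L^r}, with `F` the Fourier transform of the
distribution in question. -/
def flNorm (d : ℕ) (κ : ℝ) (r : ℝ≥0∞) (F : Ed d → ℂ) : ℝ≥0∞ :=
  eLpNorm (fun ξ => jap ξ ^ κ * ‖F ξ‖) r volume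

/-- Gevrey–Fourier–Lebesgue norm ‖e^{a(1+|ξ|^s)}⟨ξ⟩^{κs} F‖_{L^r} (Fourier side). -/
def gNorm (d : ℕ) (s a κ : ℝ) (r : ℝ≥0∞) (F : Ed d → ℂ) : ℝ≥0∞ :=
  eLpNorm (fun ξ => Real.exp (a * (1 + ‖ξ‖ ^ s)) * jap ξ ^ (κ * s) * ‖F ξ‖) r volume

/-- The two-tiered norm X_{a,γ}^{κ₁,κ₂,r₁,r₂}. -/
def xNorm (d : ℕ) (γ s a κ₁ κ₂ : ℝ) (r₁ r₂ : ℝ≥0∞) (F : Ed d → ℂ) : ℝ≥0∞ :=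
  if γ ≤ 1 then gNorm d s a κ₁ r₁ F else gNorm d s a κ₁ r₁ F + gNorm d s a κ₂ r₂ F

/-- The exponent 2q/(q-1) ∈ (2,∞], interpreted as ∞ when q = 1. -/
def qExp (q : ℝ) : ℝ≥0∞ := if q ≤ 1 then ∞ else ENNReal.ofReal (2 * q / (q - 1))

/-- Fourier side of the bilinear operator B^t. -/
def Bhat (d : ℕ) (s ν Wt : ℝ) (ghat : Ed d → ℂ) (M : Ed d →L[ℝ] Ed d)
    (F H : Ed d → ℂ) (ξ : Ed d) : ℂ :=
  -((((2 * Real.pi) ^ d)⁻¹ : ℝ) : ℂ) *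
    ∫ η : Ed d,
      ((Real.exp (-(ν * Wt * (‖ξ‖ ^ s - ‖ξ - η‖ ^ s - ‖η‖ ^ s - 1))) : ℝ) : ℂ) *
        ((inner ℝ ξ (M η) : ℝ) : ℂ) * ghat η * F (ξ - η) * H η

/-- `ghat` is the Fourier transform of an admissible interaction potential:
locally integrable with |ξ ĝ(ξ)| ≤ C_g |ξ|^{1-γ}. -/
def IsKernel (d : ℕ) (γ Cg : ℝ) (ghat : Ed d → ℂ) : Prop :=
  MeasureTheory.LocallyIntegrable ghat volume ∧
    ∀ ξ : Ed d, ξ ≠ 0 → ‖ξ‖ * ‖ghat ξ‖ ≤ Cg * ‖ξ‖ ^ (1 - γ)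

/-- A path in Ω_{α,β,ν}. -/
def IsPath (α β ν : ℝ) (W : ℝ → ℝ) : Prop :=
  ContinuousOn W (Ici 0) ∧ W 0 = 0 ∧ ∀ t ≥ (0 : ℝ), 0 ≤ α + β * t - ν * W t

/-- The heat-type multiplier symbol e^{-(tν²/2)(1+|ξ|^s)²}. -/
def heatMul (s ν t : ℝ) {d : ℕ} (ξ : Ed d) : ℝ :=
  Real.exp (-(t * ν ^ 2 / 2 * (1 + ‖ξ‖ ^ s) ^ 2))

/-- Mild solution on [0,T], formulated on the Fourier side: `μ t` is the Fourier
transform of the solution at time `t`, `μ0` that of the initial datum. -/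
def IsMildSol (d : ℕ) (s ν : ℝ) (ghat : Ed d → ℂ) (M : Ed d →L[ℝ] Ed d)
    (W : ℝ → ℝ) (T : ℝ) (μ0 : Ed d → ℂ) (μ : ℝ → Ed d → ℂ) : Prop :=
  ∀ t ∈ Icc (0 : ℝ) T, ∀ᵐ ξ : Ed d ∂volume, μ t ξ =
    (heatMul s ν t ξ : ℂ) * μ0 ξ -
      ∫ τ in Ioc (0 : ℝ) t,
        (heatMul s ν (t - τ) ξ : ℂ) * Bhat d s ν (W τ) ghat M (μ τ) (μ τ) ξ

/-- Continuity of a curve in the Fourier–Lebesgue norm Ŵ^{κ,r} on [0,T]. -/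
def FLContOn (d : ℕ) (κ : ℝ) (r : ℝ≥0∞) (T : ℝ) (μ : ℝ → Ed d → ℂ) : Prop :=
  ∀ t ∈ Icc (0 : ℝ) T, Tendsto (fun τ => flNorm d κ r (fun ξ => μ τ ξ - μ t ξ))
    (nhdsWithin t (Icc 0 T)) (nhds 0)

/-- The norm ‖μ‖_{C_T⁰ G_φ^{κ,r}} with φ^t = α + βt. -/
def gSup (d : ℕ) (s α β κ : ℝ) (r : ℝ≥0∞) (T : ℝ) (μ : ℝ → Ed d → ℂ) : ℝ≥0∞ :=
  ⨆ t ∈ Icc (0 : ℝ) T, gNorm d s (α + β * t) κ r (μ t)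

/-- The norm ‖μ‖_{C_T⁰ X_{φ,γ}^{κ₁,κ₂,r₁,r₂}} with φ^t = α + βt. -/
def xSup (d : ℕ) (γ s α β κ₁ κ₂ : ℝ) (r₁ r₂ : ℝ≥0∞) (T : ℝ) (μ : ℝ → Ed d → ℂ) : ℝ≥0∞ :=
  ⨆ t ∈ Icc (0 : ℝ) T, xNorm d γ s (α + β * t) κ₁ κ₂ r₁ r₂ (μ t)

/-- The Duhamel term ∫₀^t e^{-((t-τ)ν²/2)(1+|∇|^s)²} B^τ(μ₁^τ,μ₂^τ) dτ (Fourier side). -/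
def duhamel (d : ℕ) (s ν : ℝ) (ghat : Ed d → ℂ) (M : Ed d →L[ℝ] Ed d) (W : ℝ → ℝ)
    (μ₁ μ₂ : ℝ → Ed d → ℂ) (t : ℝ) (ξ : Ed d) : ℂ :=
  ∫ τ in Ioc (0 : ℝ) t,
    (heatMul s ν (t - τ) ξ : ℂ) * Bhat d s ν (W τ) ghat M (μ₁ τ) (μ₂ τ) ξ

/-- The Fourier transform with the convention f̂(ξ) = ∫ f(x) e^{-i x·ξ} dx. -/
def ft {d : ℕ} (f : Ed d → ℂ) (ξ : Ed d) : ℂ :=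
  ∫ x : Ed d, Complex.exp (-(Complex.I * ((inner ℝ x ξ : ℝ) : ℂ))) * f x


/-! Since `0 < s ≤ 1`, the map `r ↦ r ^ s` is subadditive, so `|ξ|^s ≤ |ξ-η|^s + |η|^s`. Hence
the weight `e^{φ(1+|ξ|^s)}` times the factor `e^{-νW(|ξ|^s - |ξ-η|^s - |η|^s - 1)}` of the
integrand is at most `e^{φ(1+|ξ-η|^s)} e^{φ(1+|η|^s)}` as soon as `νW ≤ φ`, while
`|ξ·𝓜η| |ĝ(η)| ≤ |𝓜| |ξ| |η| |ĝ(η)| ≤ C_g |𝓜| |ξ| |η|^{1-γ}`. Integrating the pointwise bound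
gives the estimate. -/

lemma norm_rpow_le_norm_sub_rpow_add_norm_rpow {E : Type*} [SeminormedAddCommGroup E]
    (x y : E) {s : ℝ} (hs0 : 0 ≤ s) (hs1 : s ≤ 1) :
    ‖x‖ ^ s ≤ ‖x - y‖ ^ s + ‖y‖ ^ s :=
  calc ‖x‖ ^ s ≤ (‖x - y‖ + ‖y‖) ^ s :=
        rpow_le_rpow (norm_nonneg _) (norm_le_norm_sub_add x y) hs0
    _ ≤ ‖x - y‖ ^ s + ‖y‖ ^ s := rpow_add_le_add_rpow (norm_nonneg _) (norm_nonneg _) hs0 hs1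

lemma exp_mul_exp_le_exp_mul_exp {φ κ a b c : ℝ} (hκ : κ ≤ φ) (habc : a ≤ b + c) :
    exp (φ * (1 + a)) * exp (-(κ * (a - b - c - 1))) ≤
      exp (φ * (1 + b)) * exp (φ * (1 + c)) := by
  rw [← exp_add, ← exp_add, exp_le_exp]
  nlinarith [mul_nonneg (sub_nonneg.2 hκ) (sub_nonneg.2 habc)]

lemma abs_inner_mul_norm_le {E : Type*} [NormedAddCommGroup E] [InnerProductSpace ℝ E]
    {γ Cg : ℝ} (hCg : 0 ≤ Cg) {g : E → ℂ} (hg : ∀ η, η ≠ 0 → ‖η‖ * ‖g η‖ ≤ Cg * ‖η‖ ^ (1 - γ))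
    (M : E →L[ℝ] E) (ξ η : E) :
    |⟪ξ, M η⟫| * ‖g η‖ ≤ Cg * ‖M‖ * (‖ξ‖ * ‖η‖ ^ (1 - γ)) := by
  rcases eq_or_ne η 0 with rfl | hη
  · simp only [map_zero, inner_zero_right, abs_zero, zero_mul]
    positivity
  calc |⟪ξ, M η⟫| * ‖g η‖ ≤ ‖ξ‖ * (‖M‖ * ‖η‖) * ‖g η‖ := by
        gcongr
        exact (abs_real_inner_le_norm _ _).trans (by gcongr; exact M.le_opNorm η)
    _ = ‖ξ‖ * ‖M‖ * (‖η‖ * ‖g η‖) := by ring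
    _ ≤ ‖ξ‖ * ‖M‖ * (Cg * ‖η‖ ^ (1 - γ)) := mul_le_mul_of_nonneg_left (hg η hη) (by positivity)
    _ = Cg * ‖M‖ * (‖ξ‖ * ‖η‖ ^ (1 - γ)) := by ring

lemma exp_mul_norm_bhat_integrand_le {d : ℕ} {γ s ν Wt φ Cg : ℝ} (hs0 : 0 < s) (hs1 : s ≤ 1)
    (hφ : 0 ≤ φ - ν * Wt) (hCg : 0 ≤ Cg) {ghat : Ed d → ℂ}
    (hg : ∀ η, η ≠ 0 → ‖η‖ * ‖ghat η‖ ≤ Cg * ‖η‖ ^ (1 - γ)) (M : Ed d →L[ℝ] Ed d)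
    (F H : Ed d → ℂ) (ξ η : Ed d) :
    exp (φ * (1 + ‖ξ‖ ^ s)) *
        ‖((exp (-(ν * Wt * (‖ξ‖ ^ s - ‖ξ - η‖ ^ s - ‖η‖ ^ s - 1))) : ℝ) : ℂ) *
          ((⟪ξ, M η⟫ : ℝ) : ℂ) * ghat η * F (ξ - η) * H η‖ ≤
      Cg * ‖M‖ * (‖ξ‖ * ‖η‖ ^ (1 - γ) * (exp (φ * (1 + ‖ξ - η‖ ^ s)) * ‖F (ξ - η)‖) *
        (exp (φ * (1 + ‖η‖ ^ s)) * ‖H η‖)) := by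
  have hweight := exp_mul_exp_le_exp_mul_exp (κ := ν * Wt) (sub_nonneg.1 hφ)
    (norm_rpow_le_norm_sub_rpow_add_norm_rpow ξ η hs0.le hs1)
  have hsymbol := abs_inner_mul_norm_le hCg hg M ξ η
  simp only [norm_mul, Complex.norm_real, norm_eq_abs, abs_exp]
  calc _ = exp (φ * (1 + ‖ξ‖ ^ s)) * exp (-(ν * Wt * (‖ξ‖ ^ s - ‖ξ - η‖ ^ s - ‖η‖ ^ s - 1))) *
          (|⟪ξ, M η⟫| * ‖ghat η‖) * (‖F (ξ - η)‖ * ‖H η‖) := by ring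
    _ ≤ exp (φ * (1 + ‖ξ - η‖ ^ s)) * exp (φ * (1 + ‖η‖ ^ s)) *
          (Cg * ‖M‖ * (‖ξ‖ * ‖η‖ ^ (1 - γ))) * (‖F (ξ - η)‖ * ‖H η‖) := by
        gcongr
    _ = _ := by ring

lemma ofReal_mul_norm_integral_le {α E : Type*} [MeasurableSpace α] {μ : Measure α}
    [NormedAddCommGroup E] [NormedSpace ℝ E] {a : ℝ} (ha : 0 ≤ a) (g : α → E) :
    ENNReal.ofReal (a * ‖∫ x, g x ∂μ‖) ≤ ∫⁻ x, ENNReal.ofReal (a * ‖g x‖) ∂μ := by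
  simp_rw [ENNReal.ofReal_mul ha, ofReal_norm]
  rw [lintegral_const_mul' _ _ ENNReal.ofReal_ne_top]
  gcongr
  exact enorm_integral_le_lintegral_enorm g

theorem stmt14_general (d : ℕ) (γ : ℝ)
    (s : ℝ) (hs0 : 0 < s) (hs1 : s ≤ 1) (ν : ℝ) (Wt φ : ℝ)
    (hφ : 0 ≤ φ - ν * Wt)
    (Cg : ℝ) (hCg : 0 < Cg) (ghat : Ed d → ℂ) (hker : IsKernel d γ Cg ghat)
    (Mop : Ed d →L[ℝ] Ed d)
    (f h : SchwartzMap (Ed d) ℂ) (ξ : Ed d) :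
    ENNReal.ofReal
        (Real.exp (φ * (1 + ‖ξ‖ ^ s)) * ‖Bhat d s ν Wt ghat Mop (ft ⇑f) (ft ⇑h) ξ‖) ≤
      ENNReal.ofReal ((((2 * Real.pi) ^ d)⁻¹ : ℝ) * Cg * ‖Mop‖) *
        ∫⁻ η : Ed d,
          ENNReal.ofReal (‖ξ‖ * ‖η‖ ^ (1 - γ) *
            (Real.exp (φ * (1 + ‖ξ - η‖ ^ s)) * ‖ft (⇑f) (ξ - η)‖) *
            (Real.exp (φ * (1 + ‖η‖ ^ s)) * ‖ft (⇑h) η‖)) := by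
  have hc : (0 : ℝ) ≤ ((2 * π) ^ d)⁻¹ := by positivity
  have hCM : 0 ≤ Cg * ‖Mop‖ := by positivity
  rw [Bhat, norm_mul, norm_neg, Complex.norm_real, norm_of_nonneg hc, mul_left_comm,
    mul_assoc _ Cg, ENNReal.ofReal_mul hc, ENNReal.ofReal_mul hc, mul_assoc]
  gcongr
  simp_rw [← lintegral_const_mul' _ _ ENNReal.ofReal_ne_top, ← ENNReal.ofReal_mul hCM]
  refine (ofReal_mul_norm_integral_le (exp_pos _).le _).trans (lintegral_mono fun η => ?_)
  exact ENNReal.ofReal_le_ofReal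
    (exp_mul_norm_bhat_integrand_le hs0 hs1 hφ hCg.le hker.2 Mop _ _ ξ η)

/-- pointwise exponentially-weighted bound on the Fourier transform of
B^t(f,h) in terms of the weighted Fourier transforms of f and h. -/
theorem stmt14 (d : ℕ) (hd : 1 ≤ d) (γ : ℝ) (hγ0 : 0 < γ) (hγd : γ < d + 1)
    (s : ℝ) (hs0 : 0 < s) (hs1 : s ≤ 1) (ν : ℝ) (hν : 0 < ν) (Wt φ : ℝ)
    (hφ0 : 0 ≤ φ) (hφ : 0 ≤ φ - ν * Wt)
    (Cg : ℝ) (hCg : 0 < Cg) (ghat : Ed d → ℂ) (hker : IsKernel d γ Cg ghat)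
    (Mop : Ed d →L[ℝ] Ed d)
    (f h : SchwartzMap (Ed d) ℂ) (ξ : Ed d) :
    ENNReal.ofReal
        (Real.exp (φ * (1 + ‖ξ‖ ^ s)) * ‖Bhat d s ν Wt ghat Mop (ft ⇑f) (ft ⇑h) ξ‖) ≤
      ENNReal.ofReal ((((2 * Real.pi) ^ d)⁻¹ : ℝ) * Cg * ‖Mop‖) *
        ∫⁻ η : Ed d,
          ENNReal.ofReal (‖ξ‖ * ‖η‖ ^ (1 - γ) *
            (Real.exp (φ * (1 + ‖ξ - η‖ ^ s)) * ‖ft (⇑f) (ξ - η)‖) *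
            (Real.exp (φ * (1 + ‖η‖ ^ s)) * ‖ft (⇑h) η‖)) :=
  stmt14_general d γ s hs0 hs1 ν Wt φ hφ Cg hCg ghat hker Mop f h ξ

end
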